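/- arXiv:1611.02435 — 5 statements merged into one kernel-verified Lean document; each statement's English description precedes it below -/
import Mathlib

section
/- For the companion pencil with V having subdiagonal ones and last column (-v_1,...,-v_n)^T, and W being the identity except last column (w_1,...,w_{n-1},w_n)^T, where v_1 = a_0, v_{i+1} + w_i = a_i for i=1,...,n-1, and w_n = a_n, the generalized eigenvalues satisfy det(V - λW) = (-1)^n p(λ), where p(λ) = a_n λ^n + ... + a_0. In particular the eigenvalues of the pencil (V,W) are exactly the roots of p. -/
open Matrix Finset

/-!
`V - λW` has ones on the subdiagonal, `-λ` on the rest of the diagonal, and last column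
`c_i = -(v_{i+1} + λ w_{i+1})`. Expanding along the first row gives `-λ` times a matrix of the
same shape (with `c` shifted) plus `± c_0` times a unit upper triangular minor, so by induction the
determinant of such a matrix of size `n` is `(-1)^(n-1) ∑ λᵏ c_k`. Regrouping the coefficients of
`∑ λᵏ (v_{k+1} + λ w_{k+1})` by the splitting `v_{i+1} + w_i = a_i` gives `p(λ)`.
-/

section CompanionPencil

variable {R : Type*} [CommRing R]

def companionPencil (n : ℕ) (x : R) (c : ℕ → R) : Matrix (Fin (n + 1)) (Fin (n + 1)) R :=
  Matrix.of fun i j =>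
    if j = Fin.last n then c i
    else if (i : ℕ) = j + 1 then 1
    else if i = j then -x else 0

lemma companionPencil_submatrix_succ_succ (n : ℕ) (x : R) (c : ℕ → R) :
    (companionPencil (n + 1) x c).submatrix Fin.succ Fin.succ =
      companionPencil n x (fun k => c (k + 1)) := by
  ext i j
  simp [companionPencil, Fin.ext_iff]

lemma det_companionPencil_submatrix_succ_castSucc (n : ℕ) (x : R) (c : ℕ → R) :
    ((companionPencil (n + 1) x c).submatrix Fin.succ Fin.castSucc).det = 1 := by
  rw [det_of_isUpperTriangular]
  · refine prod_eq_one fun k _ => ?_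
    simp [companionPencil, Fin.ext_iff, k.isLt.ne]
  · intro i j (hji : j < i)
    simp only [submatrix_apply, companionPencil, of_apply, Fin.ext_iff, Fin.val_succ,
      Fin.val_castSucc, Fin.val_last]
    rw [if_neg (by omega), if_neg (by omega), if_neg (by omega)]

theorem det_companionPencil (n : ℕ) (x : R) (c : ℕ → R) :
    (companionPencil n x c).det = (-1) ^ n * ∑ k ∈ range (n + 1), x ^ k * c k := by
  induction n generalizing c with
  | zero => simp [companionPencil]
  | succ n ih =>
    have hrow : ∀ j : Fin n, companionPencil (n + 1) x c 0 j.castSucc.succ = 0 := fun j => by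
      simp [companionPencil, Fin.ext_iff, j.isLt.ne]
    rw [det_succ_row_zero, Fin.sum_univ_succ, Fin.sum_univ_castSucc]
    simp only [hrow, mul_zero, zero_mul, sum_const_zero, zero_add, Fin.succAbove_zero,
      Fin.succ_last, Fin.succAbove_last, companionPencil_submatrix_succ_succ,
      det_companionPencil_submatrix_succ_castSucc, ih]
    have h00 : companionPencil (n + 1) x c 0 0 = -x := by simp [companionPencil]
    have h0last : companionPencil (n + 1) x c 0 (Fin.last _) = c 0 := by simp [companionPencil]
    have hshift : ∑ k ∈ range (n + 1), x ^ (k + 1) * c (k + 1) =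
        x * ∑ k ∈ range (n + 1), x ^ k * c (k + 1) := by
      rw [mul_sum]
      exact sum_congr rfl fun _ _ => by ring
    rw [h00, h0last, sum_range_succ' _ (n + 1), hshift]
    simp only [Fin.val_zero, Fin.val_last, Nat.succ_eq_add_one, pow_zero]
    ring

end CompanionPencil

lemma sum_pow_mul_add_eq_sum_of_split {R : Type*} [CommSemiring R] (m : ℕ) (x : R)
    (a v w : ℕ → R) (hv1 : v 1 = a 0)
    (hvw : ∀ i, 1 ≤ i → i ≤ m → v (i + 1) + w i = a i)
    (hwm : w (m + 1) = a (m + 1)) :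
    ∑ k ∈ range (m + 1), x ^ k * (v (k + 1) + x * w (k + 1)) =
      ∑ k ∈ range (m + 2), a k * x ^ k := by
  have hmid : ∑ k ∈ range m, x ^ (k + 1) * (v (k + 1 + 1) + w (k + 1)) =
      ∑ k ∈ range m, a (k + 1) * x ^ (k + 1) :=
    sum_congr rfl fun k hk => by
      rw [hvw (k + 1) le_add_self (mem_range.mp hk), mul_comm]
  calc ∑ k ∈ range (m + 1), x ^ k * (v (k + 1) + x * w (k + 1))
      = ∑ k ∈ range (m + 1), x ^ k * v (k + 1) +
          ∑ k ∈ range (m + 1), x ^ (k + 1) * w (k + 1) := by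
        rw [← sum_add_distrib]
        exact sum_congr rfl fun k _ => by ring
    _ = ∑ k ∈ range m, x ^ (k + 1) * (v (k + 1 + 1) + w (k + 1)) + v 1 +
          x ^ (m + 1) * w (m + 1) := by
        rw [sum_range_succ' _ m, sum_range_succ _ m]
        simp only [mul_add, sum_add_distrib, pow_zero, one_mul, zero_add]
        ring
    _ = ∑ k ∈ range (m + 2), a k * x ^ k := by
        rw [hmid, hv1, hwm, sum_range_succ _ (m + 1), sum_range_succ' _ m]
        ring

theorem companion_pencil_det_general (n : ℕ) (hn : 0 < n) (a v w : ℕ → ℂ)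
    (hv1 : v 1 = a 0)
    (hvw : ∀ i, 1 ≤ i → i ≤ n - 1 → v (i + 1) + w i = a i)
    (hwn : w n = a n)
    (V W : Matrix (Fin n) (Fin n) ℂ)
    (hV : ∀ i j : Fin n, V i j =
      if (i : ℕ) = (j : ℕ) + 1 then 1
      else if (j : ℕ) = n - 1 then -v ((i : ℕ) + 1)
      else 0)
    (hW : ∀ i j : Fin n, W i j =
      if (j : ℕ) = n - 1 then w ((i : ℕ) + 1)
      else if i = j then 1 else 0) :
    ∀ lam : ℂ, (V - lam • W).det =
      (-1) ^ n * ∑ k ∈ Finset.range (n + 1), a k * lam ^ k := by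
  obtain ⟨m, rfl⟩ : ∃ m, n = m + 1 := ⟨n - 1, by omega⟩
  intro lam
  have hpencil :
      V - lam • W = companionPencil m lam (fun i => -(v (i + 1) + lam * w (i + 1))) := by
    ext i j
    have hi := i.isLt
    simp only [Matrix.sub_apply, Matrix.smul_apply, smul_eq_mul, hV, hW, companionPencil, of_apply,
      Fin.ext_iff, Fin.val_last, Nat.add_sub_cancel]
    split_ifs <;> first | omega | ring
  have hsum := sum_pow_mul_add_eq_sum_of_split m lam a v w hv1
    (fun i h1 h2 => hvw i h1 (by omega)) hwn
  rw [hpencil, det_companionPencil, ← hsum, pow_succ]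
  simp only [mul_neg, sum_neg_distrib]
  ring

/-- For the companion pencil `(V, W)` built from splittings `v₁ = a₀`,
`v_{i+1} + w_i = a_i` (1 ≤ i ≤ n-1), `w_n = a_n`, one has
`det(V - λW) = (-1)ⁿ p(λ)` where `p(λ) = ∑ a_k λ^k`; hence the eigenvalues of
the pencil are exactly the roots of `p`. (Indices of `a`, `v`, `w` are
1-based as natural-number-indexed functions.) -/
theorem companion_pencil_det (n : ℕ) (hn : 0 < n) (a v w : ℕ → ℂ)
    (ha : a n ≠ 0)
    (hv1 : v 1 = a 0)
    (hvw : ∀ i, 1 ≤ i → i ≤ n - 1 → v (i + 1) + w i = a i)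
    (hwn : w n = a n)
    (V W : Matrix (Fin n) (Fin n) ℂ)
    (hV : ∀ i j : Fin n, V i j =
      if (i : ℕ) = (j : ℕ) + 1 then 1
      else if (j : ℕ) = n - 1 then -v ((i : ℕ) + 1)
      else 0)
    (hW : ∀ i j : Fin n, W i j =
      if (j : ℕ) = n - 1 then w ((i : ℕ) + 1)
      else if i = j then 1 else 0) :
    ∀ lam : ℂ, (V - lam • W).det =
      (-1) ^ n * ∑ k ∈ Finset.range (n + 1), a k * lam ^ k :=
  companion_pencil_det_general n hn a v w hv1 hvw hwn V W hV hW
end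

section
/- (Turnover conservation) If F_j G_{j+1} H_j = M_{j+1} Ĝ_j Ĝ_{j+1} where F_j, H_j, Ĝ_j are 3×3 unitary core transformations acting on rows/columns 1,2 with active parts [c, -s; s, conj(c)] (s real), and G_{j+1}, M_{j+1}, Ĝ_{j+1} act on rows/columns 2,3, then the subdiagonal-parameter product is conserved: letting s_j, s_{j+1} be the s-parameters of F_j and G_{j+1}, and ŝ_j, ŝ_{j+1} those of Ĝ_j and Ĝ_{j+1}, we have ŝ_j ŝ_{j+1} = s_j s_{j+1}. -/
/-!
Both sides are compared in their `(1,3)` entry. A core transformation on rows/columns `1,2`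
fixes the third column when applied on the right, and one on `2,3` fixes the first row when
applied on the left, so the corner entry of either side is that of a product
`(1,2)(2,3)`, which is `s * s'`.
-/

open Matrix

/-- A core transformation acting on rows/columns 1,2 of `ℂ³`. -/
def core12 (c : ℂ) (s : ℝ) : Matrix (Fin 3) (Fin 3) ℂ :=
  !![c, -(s : ℂ), 0; (s : ℂ), (starRingEnd ℂ) c, 0; 0, 0, 1]

/-- A core transformation acting on rows/columns 2,3 of `ℂ³`. -/
def core23 (c : ℂ) (s : ℝ) : Matrix (Fin 3) (Fin 3) ℂ :=
  !![1, 0, 0; 0, c, -(s : ℂ); 0, (s : ℂ), (starRingEnd ℂ) c]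

theorem mul_core12_apply_two (A : Matrix (Fin 3) (Fin 3) ℂ) (c : ℂ) (s : ℝ) (i : Fin 3) :
    (A * core12 c s) i 2 = A i 2 := by
  simp [core12, mul_apply, Fin.sum_univ_three]

theorem core23_mul_apply_zero (A : Matrix (Fin 3) (Fin 3) ℂ) (c : ℂ) (s : ℝ) (j : Fin 3) :
    (core23 c s * A) 0 j = A 0 j := by
  simp [core23, mul_apply, Fin.sum_univ_three]

theorem core12_mul_core23_apply_zero_two (c c' : ℂ) (s s' : ℝ) :
    (core12 c s * core23 c' s') 0 2 = ((s * s' : ℝ) : ℂ) := by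
  simp [core12, core23, mul_apply, Fin.sum_univ_three]

theorem turnover_conserves_s_product_general
    (cF cG cH cM cGj cGj1 : ℂ) (sF sG sH sM sGj sGj1 : ℝ)
    (heq : core12 cF sF * core23 cG sG * core12 cH sH =
      core23 cM sM * core12 cGj sGj * core23 cGj1 sGj1) :
    sGj * sGj1 = sF * sG := by
  have corner := congrFun (congrFun heq 0) 2
  rw [mul_core12_apply_two, Matrix.mul_assoc, core23_mul_apply_zero,
    core12_mul_core23_apply_zero_two, core12_mul_core23_apply_zero_two] at corner
  exact_mod_cast corner.symm

/-- Turnover conservation: if `F_j G_{j+1} H_j = M_{j+1} Ĝ_j Ĝ_{j+1}` with all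
factors unitary core transformations in the indicated patterns, then
`ŝ_j ŝ_{j+1} = s_j s_{j+1}`. -/
theorem turnover_conserves_s_product
    (cF cG cH cM cGj cGj1 : ℂ) (sF sG sH sM sGj sGj1 : ℝ)
    (hF : ‖cF‖ ^ 2 + sF ^ 2 = 1)
    (hG : ‖cG‖ ^ 2 + sG ^ 2 = 1)
    (hH : ‖cH‖ ^ 2 + sH ^ 2 = 1)
    (hM : ‖cM‖ ^ 2 + sM ^ 2 = 1)
    (hGj : ‖cGj‖ ^ 2 + sGj ^ 2 = 1)
    (hGj1 : ‖cGj1‖ ^ 2 + sGj1 ^ 2 = 1)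
    (heq : core12 cF sF * core23 cG sG * core12 cH sH =
      core23 cM sM * core12 cGj sGj * core23 cGj1 sGj1) :
    sGj * sGj1 = sF * sG :=
  turnover_conserves_s_product_general cF cG cH cM cGj cGj1 sF sG sH sM sGj sGj1 heq
end

section
/- Let C = C_1 ⋯ C_n be a descending product of core transformations (as (n+1)×(n+1) unitary matrices) such that C z = α e_1, where z = -(v_2, v_3, ..., v_n, v_1, 1)^T and |α| = ‖z‖₂. Let Y be the (n+1)×(n+1) permutation matrix that is the identity in the first n-1 rows/columns and has the 2×2 block [0, 1; 1, 0] in rows/columns n, n+1. Set B = C Y and y = e_n ∈ ℂ^{n+1}. Then C*(B + α e_1 y^T) equals the (n+1)×(n+1) matrix R̲ that is the identity in its first n-1 diagonal entries, with column n equal to (-v_2, ..., -v_n, -v_1, 0)^T and entry (n, n+1) equal to 1, all other entries zero. In particular R̲ is upper triangular with zero last row. -/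
open Matrix Finset

/- Since `C` is unitary, `Cᴴ (C Y + α e₁ yᵀ) = Y + (Cᴴ α e₁) yᵀ = Y + z yᵀ`, and adding `z` to
column `n` of the swap `Y` is, entry by entry, the matrix `R̲`. -/

theorem Matrix.conjTranspose_mul_add_vecMulVec_of_mem_unitaryGroup {m R : Type*} [Fintype m]
    [DecidableEq m] [CommRing R] [StarRing R] {C : Matrix m m R}
    (hC : C ∈ unitaryGroup m R) {z w : m → R} (hCz : C *ᵥ z = w) (Y : Matrix m m R)
    (u : m → R) :
    Cᴴ * (C * Y + vecMulVec w u) = Y + vecMulVec z u := by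
  have hCC : Cᴴ * C = 1 := hC.1
  rw [Matrix.mul_add, ← Matrix.mul_assoc, hCC, Matrix.one_mul, mul_vecMulVec, ← hCz,
    mulVec_mulVec, hCC, one_mulVec]

/-- Factorization of the augmented upper triangular unitary-plus-rank-one
matrix: with `C z = α e₁`, `|α| = ‖z‖₂`, `Y` the permutation swapping the last
two rows/columns, `B = C Y` and `y = eₙ`, one has
`C*(B + α e₁ yᵀ) = R̲`, where `R̲` is identity in its first `n-1` diagonal
entries, has column `n` equal to `(-v₂, …, -vₙ, -v₁, 0)ᵀ`, entry `(n, n+1)`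
equal to `1`, and zeros elsewhere; in particular `R̲` is upper triangular with
zero last row. (`v` is 1-based.) -/
theorem augmented_triangular_factorization (n : ℕ) (hn : 0 < n) (v : ℕ → ℂ)
    (C Y R : Matrix (Fin (n + 1)) (Fin (n + 1)) ℂ)
    (z : Fin (n + 1) → ℂ) (α : ℂ)
    (hz : ∀ i : Fin (n + 1), z i =
      if (i : ℕ) < n - 1 then -v ((i : ℕ) + 2)
      else if (i : ℕ) = n - 1 then -v 1
      else -1)
    (hCu : C ∈ Matrix.unitaryGroup (Fin (n + 1)) ℂ)
    (hCz : C *ᵥ z = α • (Pi.single (0 : Fin (n + 1)) (1 : ℂ) : Fin (n + 1) → ℂ))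
    (hY : ∀ i j : Fin (n + 1), Y i j =
      if ((i : ℕ) < n - 1 ∧ i = j) ∨ ((i : ℕ) = n - 1 ∧ (j : ℕ) = n) ∨
          ((i : ℕ) = n ∧ (j : ℕ) = n - 1) then 1 else 0)
    (hR : ∀ i j : Fin (n + 1), R i j =
      if (j : ℕ) = n - 1 then
        (if (i : ℕ) < n - 1 then -v ((i : ℕ) + 2)
         else if (i : ℕ) = n - 1 then -v 1
         else 0)
      else if (i : ℕ) = (j : ℕ) ∧ (i : ℕ) < n - 1 then 1
      else if (i : ℕ) = n - 1 ∧ (j : ℕ) = n then 1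
      else 0) :
    Cᴴ * (C * Y + α • Matrix.vecMulVec ((Pi.single (0 : Fin (n + 1)) (1 : ℂ) : Fin (n + 1) → ℂ))
        ((Pi.single (⟨n - 1, by omega⟩ : Fin (n + 1)) (1 : ℂ) : Fin (n + 1) → ℂ))) = R ∧
      (∀ i j : Fin (n + 1), (j : ℕ) < (i : ℕ) → R i j = 0) ∧
      (∀ j : Fin (n + 1), R (Fin.last n) j = 0) := by
  refine ⟨?_, fun i j hji => ?_, fun j => ?_⟩
  · rw [← smul_vecMulVec, conjTranspose_mul_add_vecMulVec_of_mem_unitaryGroup hCu hCz]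
    ext i j
    have hi := i.isLt
    have hj := j.isLt
    simp only [Matrix.add_apply, vecMulVec_apply, hY, hR, hz, Pi.single_apply, Fin.ext_iff]
    split_ifs <;> first | ring1 | (exfalso; omega)
  · rw [hR]
    split_ifs <;> first | rfl | (exfalso; omega)
  · rw [hR, Fin.val_last]
    split_ifs <;> first | rfl | (exfalso; omega)
end

section
/- (Turnover existence) Any product F G H, where F and H are 3×3 core transformations acting on rows/columns 1,2 and G acts on rows/columns 2,3 (all unitary), can be refactored as F' G' H', where F' and H' act on rows/columns 2,3 and G' acts on rows/columns 1,2, with F', G', H' unitary core transformations. -/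
open Matrix

/-- `M` is a core transformation on `ℂ³` acting on rows/columns 1,2: unitary
and equal to the identity outside the leading 2×2 block. -/
def IsCore12 (M : Matrix (Fin 3) (Fin 3) ℂ) : Prop :=
  M ∈ Matrix.unitaryGroup (Fin 3) ℂ ∧
    M 0 2 = 0 ∧ M 1 2 = 0 ∧ M 2 0 = 0 ∧ M 2 1 = 0 ∧ M 2 2 = 1

/-- `M` is a core transformation on `ℂ³` acting on rows/columns 2,3: unitary
and equal to the identity outside the trailing 2×2 block. -/
def IsCore23 (M : Matrix (Fin 3) (Fin 3) ℂ) : Prop :=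
  M ∈ Matrix.unitaryGroup (Fin 3) ℂ ∧
    M 0 0 = 1 ∧ M 0 1 = 0 ∧ M 0 2 = 0 ∧ M 1 0 = 0 ∧ M 2 0 = 0

/-- A 3×3 matrix which is the identity outside the trailing 2×2 block, with the
block having orthonormal rows, is unitary. -/
lemma embed23_mem (a b c d : ℂ)
    (h1 : a * star a + b * star b = 1)
    (h2 : c * star c + d * star d = 1)
    (h3 : a * star c + b * star d = 0) :
    (!![1,0,0;0,a,b;0,c,d] : Matrix (Fin 3) (Fin 3) ℂ) ∈ Matrix.unitaryGroup (Fin 3) ℂ := by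
  simp only [Complex.star_def] at h1 h2 h3
  have h3' : c * (starRingEnd ℂ) a + d * (starRingEnd ℂ) b = 0 := by
    have h := congrArg (starRingEnd ℂ) h3
    simp only [map_add, _root_.map_mul, map_zero, Complex.conj_conj] at h
    linear_combination h
  rw [Matrix.mem_unitaryGroup_iff]
  ext i j
  fin_cases i <;> fin_cases j <;>
    simp [Matrix.mul_apply, Fin.sum_univ_three, Matrix.one_apply, Matrix.star_apply,
      Complex.star_def, Matrix.vecHead, Matrix.vecTail] <;>
    first
      | linear_combination h1
      | linear_combination h2
      | linear_combination h3
      | linear_combination h3'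

/-- Any 3×3 unitary matrix factors as (2,3)-core × (1,2)-core × (2,3)-core. -/
lemma unitary_turnover (M : Matrix (Fin 3) (Fin 3) ℂ)
    (hM : M ∈ Matrix.unitaryGroup (Fin 3) ℂ) :
    ∃ F' G' H' : Matrix (Fin 3) (Fin 3) ℂ,
      IsCore23 F' ∧ IsCore12 G' ∧ IsCore23 H' ∧ M = F' * G' * H' := by
  -- Step 1: find a 23-core A with (A * M) 2 0 = 0
  obtain ⟨A, hA, hAM⟩ : ∃ A, IsCore23 A ∧ (A * M) 2 0 = 0 := by
    by_cases h : M 1 0 = 0 ∧ M 2 0 = 0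
    · refine ⟨1, ⟨Submonoid.one_mem _, by simp, by simp, by simp, by simp, by simp⟩, ?_⟩
      simp [h.2]
    · set p := M 1 0 with hp
      set q := M 2 0 with hq
      have hpos : 0 < Complex.normSq p + Complex.normSq q := by
        have hnp := Complex.normSq_nonneg p
        have hnq := Complex.normSq_nonneg q
        rcases not_and_or.mp h with h' | h'
        · have := Complex.normSq_pos.mpr h'; linarith
        · have := Complex.normSq_pos.mpr h'; linarith
      set r : ℝ := Real.sqrt (Complex.normSq p + Complex.normSq q) with hrdef
      have hr0 : 0 < r := Real.sqrt_pos.mpr hpos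
      have hrne : (r : ℂ) ≠ 0 := Complex.ofReal_ne_zero.mpr (ne_of_gt hr0)
      have hr2 : p * (starRingEnd ℂ) p + q * (starRingEnd ℂ) q = ((r : ℂ)) ^ 2 := by
        rw [Complex.mul_conj, Complex.mul_conj, ← Complex.ofReal_pow, ← Complex.ofReal_add,
          hrdef, Real.sq_sqrt hpos.le]
      refine ⟨!![1,0,0; 0, star p / r, star q / r; 0, -q / r, p / r], ⟨?_,
        by simp [Matrix.vecHead, Matrix.vecTail], by simp [Matrix.vecHead, Matrix.vecTail],
        by simp [Matrix.vecHead, Matrix.vecTail], by simp [Matrix.vecHead, Matrix.vecTail],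
        by simp [Matrix.vecHead, Matrix.vecTail]⟩, ?_⟩
      · apply embed23_mem
        · simp only [Complex.star_def, map_div₀, Complex.conj_conj, Complex.conj_ofReal]
          field_simp
          linear_combination hr2
        · simp only [Complex.star_def, map_div₀, map_neg, Complex.conj_ofReal]
          field_simp
          linear_combination hr2
        · simp only [Complex.star_def, map_div₀, map_neg, Complex.conj_conj, Complex.conj_ofReal]
          field_simp
          ring
      · simp [Matrix.mul_apply, Fin.sum_univ_three, Matrix.vecHead, Matrix.vecTail, ← hp, ← hq]
        ring
  set N := A * M with hNdef
  have hN : N ∈ Matrix.unitaryGroup (Fin 3) ℂ := Submonoid.mul_mem _ hA.1 hM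
  set α := N 2 1 with hα
  set β := N 2 2 with hβ
  have hαβ : α * (starRingEnd ℂ) α + β * (starRingEnd ℂ) β = 1 := by
    have h1 : N * star N = 1 := Matrix.mem_unitaryGroup_iff.mp hN
    have h2 := congrArg (fun X => X 2 2) h1
    simp only [Matrix.mul_apply, Fin.sum_univ_three, Matrix.one_apply, Matrix.star_apply] at h2
    rw [hAM] at h2
    simpa [Complex.star_def] using h2
  -- Step 2: a 23-core B clearing out the rest of row 2
  set B : Matrix (Fin 3) (Fin 3) ℂ := !![1,0,0; 0, -β, star α; 0, α, star β] with hBdef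
  have hB : B ∈ Matrix.unitaryGroup (Fin 3) ℂ := by
    apply embed23_mem
    · simp only [star_neg, star_star, Complex.star_def, Complex.conj_conj]
      linear_combination hαβ
    · simp only [star_star, Complex.star_def, Complex.conj_conj]
      linear_combination hαβ
    · simp only [star_star, Complex.star_def, Complex.conj_conj]
      ring
  set G' := N * B with hGdef
  have hG : G' ∈ Matrix.unitaryGroup (Fin 3) ℂ := Submonoid.mul_mem _ hN hB
  have hG20 : G' 2 0 = 0 := by
    simp [hGdef, hBdef, Matrix.mul_apply, Fin.sum_univ_three, Matrix.vecHead, Matrix.vecTail, hAM]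
  have hG21 : G' 2 1 = 0 := by
    simp [hGdef, hBdef, Matrix.mul_apply, Fin.sum_univ_three, Matrix.vecHead, Matrix.vecTail,
      hAM, ← hα, ← hβ, Complex.star_def]
    ring
  have hG22 : G' 2 2 = 1 := by
    simp only [hGdef, hBdef, Matrix.mul_apply, Fin.sum_univ_three]
    rw [hAM]
    simp [Matrix.vecHead, Matrix.vecTail, ← hα, ← hβ, Complex.star_def]
    linear_combination hαβ
  have hGU : G' * star G' = 1 := Matrix.mem_unitaryGroup_iff.mp hG
  have hG02 : G' 0 2 = 0 := by
    have h2 := congrArg (fun X => X 0 2) hGU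
    simp only [Matrix.mul_apply, Fin.sum_univ_three, Matrix.one_apply, Matrix.star_apply] at h2
    rw [hG20, hG21, hG22] at h2
    simpa using h2
  have hG12 : G' 1 2 = 0 := by
    have h2 := congrArg (fun X => X 1 2) hGU
    simp only [Matrix.mul_apply, Fin.sum_univ_three, Matrix.one_apply, Matrix.star_apply] at h2
    rw [hG20, hG21, hG22] at h2
    simpa using h2
  refine ⟨star A, G', star B, ?_, ⟨hG, hG02, hG12, hG20, hG21, hG22⟩, ?_, ?_⟩
  · exact ⟨Unitary.star_mem hA.1, by simp [Matrix.star_apply, hA.2.1],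
      by simp [Matrix.star_apply, hA.2.2.2.2.1], by simp [Matrix.star_apply, hA.2.2.2.2.2],
      by simp [Matrix.star_apply, hA.2.2.1], by simp [Matrix.star_apply, hA.2.2.2.1]⟩
  · refine ⟨Unitary.star_mem hB, ?_, ?_, ?_, ?_, ?_⟩ <;>
      simp [hBdef, Matrix.star_apply, Matrix.vecHead, Matrix.vecTail]
  · have hA' : star A * A = 1 := Matrix.mem_unitaryGroup_iff'.mp hA.1
    have hB' : B * star B = 1 := Matrix.mem_unitaryGroup_iff.mp hB
    calc M = (star A * A) * M * (B * star B) := by rw [hA', hB']; simp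
      _ = star A * G' * star B := by
        simp only [hGdef, hNdef]
        noncomm_ring

/-- Turnover existence: every product `F G H` with `F, H` core transformations
on rows/columns 1,2 and `G` on rows/columns 2,3 refactors as `F' G' H'` with
`F', H'` on rows/columns 2,3 and `G'` on rows/columns 1,2. -/
theorem turnover_exists (F G H : Matrix (Fin 3) (Fin 3) ℂ)
    (hF : IsCore12 F) (hG : IsCore23 G) (hH : IsCore12 H) :
    ∃ F' G' H' : Matrix (Fin 3) (Fin 3) ℂ,
      IsCore23 F' ∧ IsCore12 G' ∧ IsCore23 H' ∧
      F * G * H = F' * G' * H' := by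
  obtain ⟨F', G', H', h1, h2, h3, h4⟩ :=
    unitary_turnover (F * G * H) (Submonoid.mul_mem _ (Submonoid.mul_mem _ hF.1 hG.1) hH.1)
  exact ⟨F', G', H', h1, h2, h3, h4⟩
end

section
/- Let A be the monic companion matrix with factorization A = Q(I + (αx - e_n)y^T), where Q is the cyclic shift matrix. Writing adj(λI - Q) = ∑_{k=0}^{n-1} G_k λ^k and det(λI - Q) = λ^n - 1, the coefficients of the characteristic polynomial of A satisfy: the coefficient of λ^k in det(λI - A) equals q_k - y^T G_k Q(αx - e_n), where q_n = 1, q_0 = -1, and q_k = 0 otherwise. -/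
/-!
Since `Q (I + u yᵀ) = Q + (Q u) yᵀ`, the matrix `zI - A` is the rank-one perturbation
`(zI - Q) - (Q u) yᵀ` of `zI - Q`, with `u = αx - eₙ`. The matrix determinant lemma in its
adjugate form, `det (M + a bᵀ) = det M + bᵀ adj(M) a`, which needs no invertibility, gives
`det (zI - A) = zⁿ - 1 - yᵀ adj(zI - Q) Q u`; expanding `adj(zI - Q) = ∑ zᵏ Gₖ` and comparing
coefficients of `zᵏ` gives the claim.
-/

open Matrix Finset

namespace Matrix

variable {n : Type*} [Fintype n] [DecidableEq n] {R : Type*} [CommRing R]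

theorem det_add_vecMulVec_of_isUnit {A : Matrix n n R} (hA : IsUnit A.det) (u v : n → R) :
    (A + vecMulVec u v).det = A.det + v ⬝ᵥ (A.adjugate *ᵥ u) := by
  have hfactor :
      A + vecMulVec u v = A * (1 + replicateCol Unit (A⁻¹ *ᵥ u) * replicateRow Unit v) := by
    rw [← vecMulVec_eq, mul_add, mul_one, mul_vecMulVec, mulVec_mulVec, mul_nonsing_inv _ hA,
      one_mulVec]
  rw [hfactor, det_mul, det_one_add_replicateCol_mul_replicateRow, mul_add, mul_one,
    ← cramer_eq_adjugate_mulVec, ← det_smul_inv_mulVec_eq_cramer _ _ hA, dotProduct_smul,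
    smul_eq_mul, dotProduct_comm]

/-- `t • 1 + A` is invertible for all but finitely many `t`, and both sides of the identity for
`t • 1 + A` are continuous in `t`, so the invertible case extends to `t = 0`. -/
theorem det_add_vecMulVec {𝕜 : Type*} [NontriviallyNormedField 𝕜] [CompleteSpace 𝕜]
    (A : Matrix n n 𝕜) (u v : n → 𝕜) :
    (A + vecMulVec u v).det = A.det + v ⬝ᵥ (A.adjugate *ᵥ u) := by
  have hsingular : {t : 𝕜 | (t • 1 + A).det = 0}.Finite := by
    refine (Polynomial.finite_setOfPred_isRoot (charpoly_monic (-A)).ne_zero).subset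
      fun t ht => ?_
    simpa [Polynomial.IsRoot, eval_charpoly, smul_one_eq_diagonal] using ht
  have hperturbed := Continuous.ext_on (hsingular.countable.dense_compl 𝕜)
    (f := fun t : 𝕜 => (t • 1 + A + vecMulVec u v).det)
    (g := fun t => (t • 1 + A).det + v ⬝ᵥ ((t • 1 + A).adjugate *ᵥ u))
    (by fun_prop) (by fun_prop)
    (fun t ht => det_add_vecMulVec_of_isUnit (isUnit_iff_ne_zero.mpr ht) u v)
  simpa using congrFun hperturbed 0

def cyclicShift (R : Type*) [Zero R] [One R] (n : ℕ) : Matrix (Fin n) (Fin n) R :=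
  of fun i j => if (i : ℕ) = j + 1 ∨ ((i : ℕ) = 0 ∧ (j : ℕ) = n - 1) then 1 else 0

theorem smul_one_sub_cyclicShift_apply (m : ℕ) (z : R) (i j : Fin (m + 1)) :
    (z • 1 - cyclicShift R (m + 1)) i j =
      (if (i : ℕ) = j then z else 0) -
        if (i : ℕ) = j + 1 ∨ ((i : ℕ) = 0 ∧ (j : ℕ) = m) then 1 else 0 := by
  simp only [Matrix.sub_apply, Matrix.smul_apply, one_apply, cyclicShift, of_apply,
    Nat.add_sub_cancel, Fin.ext_iff, smul_eq_mul, mul_ite, mul_one, mul_zero]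

/-- Expanding along the first row leaves two triangular minors, with diagonals `z` and `-1`. -/
theorem det_smul_one_sub_cyclicShift (m : ℕ) (z : R) :
    (z • 1 - cyclicShift R (m + 1)).det = z ^ (m + 1) - 1 := by
  have hM := smul_one_sub_cyclicShift_apply m z
  rcases m with _ | m
  · simp [hM]
  have hrow : ∀ j : Fin (m + 2), j ≠ 0 → j ≠ Fin.last (m + 1) →
      (z • 1 - cyclicShift R (m + 2)) 0 j = 0 := by
    intro j hj0 hjl
    rw [Ne, Fin.ext_iff, Fin.val_zero] at hj0
    rw [Ne, Fin.ext_iff, Fin.val_last] at hjl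
    simp [hM, hjl, Ne.symm hj0]
  have hminor₀ :
      ((z • 1 - cyclicShift R (m + 2)).submatrix Fin.succ Fin.succ).det = z ^ (m + 1) := by
    rw [det_of_isLowerTriangular _ fun i j (hij : i < j) => by
      simp only [submatrix_apply, hM, Fin.val_succ]
      rw [if_neg (by omega), if_neg (by omega), sub_zero]]
    simp [hM]
  have hminorLast : ((z • 1 - cyclicShift R (m + 2)).submatrix Fin.succ Fin.castSucc).det =
      (-1) ^ (m + 1) := by
    rw [det_of_isUpperTriangular fun i j (hij : j < i) => by
      simp only [submatrix_apply, hM, Fin.val_succ, Fin.val_castSucc]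
      rw [if_neg (by omega), if_neg (by omega), sub_zero]]
    simp [hM]
  have hcorner₀ : (z • 1 - cyclicShift R (m + 2)) 0 0 = z := by simp [hM]
  have hcornerLast : (z • 1 - cyclicShift R (m + 2)) 0 (Fin.last (m + 1)) = -1 := by simp [hM]
  have hsign : (-1 : R) ^ (m + 1) * (-1) ^ (m + 1) = 1 := by rw [← mul_pow]; simp
  rw [det_succ_row_zero, sum_eq_add 0 (Fin.last (m + 1)) (by simp [Fin.ext_iff])
    (fun j _ hj => by rw [hrow j hj.1 hj.2, mul_zero, zero_mul]) (by simp) (by simp),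
    Fin.succAbove_zero, Fin.succAbove_last, hminor₀, hminorLast, hcorner₀, hcornerLast,
    Fin.val_zero, Fin.val_last]
  linear_combination -hsign

end Matrix

theorem companion_charpoly_coeffs_general (n : ℕ) (hn : 0 < n)
    (Q A : Matrix (Fin n) (Fin n) ℂ) (x y e : Fin n → ℂ) (α : ℂ)
    (hQ : ∀ i j : Fin n, Q i j =
      if (i : ℕ) = (j : ℕ) + 1 ∨ ((i : ℕ) = 0 ∧ (j : ℕ) = n - 1) then 1 else 0)
    (hA : A = Q * (1 + Matrix.vecMulVec (α • x - e) y))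
    (G : ℕ → Matrix (Fin n) (Fin n) ℂ) (q : ℕ → ℂ)
    (hGn : G n = 0)
    (hadj : ∀ z : ℂ, (z • (1 : Matrix (Fin n) (Fin n) ℂ) - Q).adjugate =
      ∑ k ∈ Finset.range n, z ^ k • G k)
    (hq : ∀ k, q k = if k = n then 1 else if k = 0 then -1 else 0) :
    ∀ z : ℂ, (z • (1 : Matrix (Fin n) (Fin n) ℂ) - A).det =
      ∑ k ∈ Finset.range (n + 1),
        (q k - y ⬝ᵥ (G k *ᵥ (Q *ᵥ (α • x - e)))) * z ^ k := by
  intro z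
  obtain ⟨m, rfl⟩ := Nat.exists_eq_add_one_of_ne_zero hn.ne'
  have hQ_eq : Q = cyclicShift ℂ (m + 1) := by ext i j; simp [cyclicShift, hQ]
  set w := Q *ᵥ (α • x - e)
  have hsplit : z • 1 - A = (z • 1 - Q) + vecMulVec (-w) y := by
    rw [hA, mul_add, mul_one, mul_vecMulVec, neg_vecMulVec]
    abel
  have hq_sum : ∑ k ∈ range (m + 2), q k * z ^ k = z ^ (m + 1) - 1 := by
    rw [sum_range_succ, sum_range_succ', sum_eq_zero fun k hk => by
      simp [hq, (mem_range.mp hk).ne]]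
    simp [hq, sub_eq_neg_add]
  calc (z • 1 - A).det
      = (z • 1 - Q).det + y ⬝ᵥ ((z • 1 - Q).adjugate *ᵥ -w) := by
        rw [hsplit, det_add_vecMulVec]
    _ = z ^ (m + 1) - 1 - ∑ k ∈ range (m + 2), z ^ k * y ⬝ᵥ (G k *ᵥ w) := by
        rw [sum_range_succ, hGn, hadj, hQ_eq, det_smul_one_sub_cyclicShift]
        simp [sum_mulVec, dotProduct_sum, smul_mulVec, dotProduct_smul, sub_eq_add_neg,
          mulVec_neg, dotProduct_neg]
    _ = _ := by
        rw [← hq_sum, ← sum_sub_distrib]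
        exact sum_congr rfl fun k _ => by ring

/-- Coefficients of the characteristic polynomial of the companion matrix
`A = Q(I + (αx - eₙ)yᵀ)`: with `adj(λI - Q) = ∑_{k<n} G_k λ^k` and
`det(λI - Q) = λⁿ - 1 = ∑ q_k λ^k`, the coefficient of `λ^k` in
`det(λI - A)` is `q_k - yᵀ G_k Q(αx - eₙ)`. -/
theorem companion_charpoly_coeffs (n : ℕ) (hn : 0 < n)
    (Q A : Matrix (Fin n) (Fin n) ℂ) (x y e : Fin n → ℂ) (α : ℂ)
    (hQ : ∀ i j : Fin n, Q i j =
      if (i : ℕ) = (j : ℕ) + 1 ∨ ((i : ℕ) = 0 ∧ (j : ℕ) = n - 1) then 1 else 0)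
    (he : ∀ i : Fin n, e i = if (i : ℕ) = n - 1 then 1 else 0)
    (hA : A = Q * (1 + Matrix.vecMulVec (α • x - e) y))
    (G : ℕ → Matrix (Fin n) (Fin n) ℂ) (q : ℕ → ℂ)
    (hGn : G n = 0)
    (hadj : ∀ z : ℂ, (z • (1 : Matrix (Fin n) (Fin n) ℂ) - Q).adjugate =
      ∑ k ∈ Finset.range n, z ^ k • G k)
    (hq : ∀ k, q k = if k = n then 1 else if k = 0 then -1 else 0) :
    ∀ z : ℂ, (z • (1 : Matrix (Fin n) (Fin n) ℂ) - A).det =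
      ∑ k ∈ Finset.range (n + 1),
        (q k - y ⬝ᵥ (G k *ᵥ (Q *ᵥ (α • x - e)))) * z ^ k :=
  companion_charpoly_coeffs_general n hn Q A x y e α hQ hA G q hGn hadj hq
end
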